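/- Let L ⊂ ℝ^n be a bimodular lattice of rank n, let A_1 ⊂ ℝ be the rank-1 lattice generated by a vector of square 2, and let U = (L × A_1) ∪ ((L' \ L) × (A_1' \ A_1)) ⊂ ℝ^{n+1} be the associated unimodular overlattice of L ⊕ A_1. Then U admits an orthonormal ℤ-basis (i.e. U is isomorphic as a lattice to the standard lattice I^{n+1} = ℤ^{n+1}) if and only if L is diagonal, i.e. L is isomorphic as a lattice to Δ_n = I^{n−1} ⊕ A_1. -/

import Mathlib

/-!
The vector `w = (0, r)` of `U` has norm `2`. If `U` has an orthonormal `ℤ`-basis `e`, the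
coefficients of `w` are integers with squares summing to `2`, so after changing signs
`w = e i + e j`. The orthogonal complement of `w` in `U` is `L × 0`, and it has the orthogonal
`ℤ`-basis `e i - e j`, `e k` (`k ≠ i, j`) with Gram matrix `diag(2, 1, …, 1)`.

Conversely, if `b` is a basis of `L` with Gram matrix `diag(1, …, 1, 2)` and `h = b last / 2`, then
the vectors `(b k, 0)` (`k ≠ last`), `(h, r / 2)` and `(h, -r / 2)` of `U` are orthonormal, and they
form a `ℤ`-basis because `U` is integral: on `(L' \ L) × (A₁' \ A₁)` each factor contributes `1/2`
modulo `ℤ` to inner products.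
-/

open scoped RealInnerProductSpace

noncomputable section

/-- The dual of a subset of Euclidean space: vectors pairing integrally with everything. -/
def dualSet {n : ℕ} (Λ : Set (EuclideanSpace ℝ (Fin n))) : Set (EuclideanSpace ℝ (Fin n)) :=
  {x | ∀ v ∈ Λ, ∃ k : ℤ, ⟪x, v⟫ = (k : ℝ)}

/-- A (positive definite integral) lattice of full rank `n` in `ℝ^n`: an additive subgroup,
free abelian of rank `n` (it has a `ℤ`-basis indexed by `Fin n`), spanning `ℝ^n` over `ℝ`,
with all pairwise inner products integral. -/
def IsLattice {n : ℕ} (Λ : Set (EuclideanSpace ℝ (Fin n))) : Prop :=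
  (0 ∈ Λ ∧ (∀ x ∈ Λ, ∀ y ∈ Λ, x + y ∈ Λ) ∧ (∀ x ∈ Λ, -x ∈ Λ)) ∧
  (∃ b : Fin n → EuclideanSpace ℝ (Fin n),
      (∀ i, b i ∈ Λ) ∧ LinearIndependent ℤ b ∧
      ∀ x ∈ Λ, ∃ c : Fin n → ℤ, x = ∑ i, (c i : ℝ) • b i) ∧
  Submodule.span ℝ Λ = ⊤ ∧
  ∀ v ∈ Λ, ∀ w ∈ Λ, ∃ k : ℤ, ⟪v, w⟫ = (k : ℝ)

/-- A unimodular lattice: a lattice equal to its own dual. -/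
def IsUnimodular {n : ℕ} (Λ : Set (EuclideanSpace ℝ (Fin n))) : Prop :=
  IsLattice Λ ∧ dualSet Λ = Λ

/-- A bimodular lattice: a lattice of index 2 in its dual. -/
def IsBimodular {n : ℕ} (Λ : Set (EuclideanSpace ℝ (Fin n))) : Prop :=
  IsLattice Λ ∧
  ∃ w ∈ dualSet Λ \ Λ, ∀ x ∈ dualSet Λ, x ∈ Λ ∨ x - w ∈ Λ

/-- Characteristic covectors: elements `ξ` of the dual with `ξ·v ≡ v·v (mod 2)` for all `v ∈ Λ`. -/
def CharSet {n : ℕ} (Λ : Set (EuclideanSpace ℝ (Fin n))) : Set (EuclideanSpace ℝ (Fin n)) :=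
  {ξ | ξ ∈ dualSet Λ ∧ ∀ v ∈ Λ, ∃ k : ℤ, ⟪ξ, v⟫ - ⟪v, v⟫ = 2 * (k : ℝ)}

/-- `CharSign Λ ε` (for `ε = ±1`): characteristic covectors with `ξ·ξ ≡ n + ε (mod 8)`. -/
def CharSign {n : ℕ} (Λ : Set (EuclideanSpace ℝ (Fin n))) (ε : ℤ) :
    Set (EuclideanSpace ℝ (Fin n)) :=
  {ξ | ξ ∈ CharSet Λ ∧ ∃ k : ℤ, ⟪ξ, ξ⟫ = (n : ℝ) + (ε : ℝ) + 8 * (k : ℝ)}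

/-- The defect `d(Λ) = min_{ξ ∈ Char(Λ)} (ξ·ξ − n)/4` of a full-rank lattice in `ℝ^n`. -/
def defect {n : ℕ} (Λ : Set (EuclideanSpace ℝ (Fin n))) : ℝ :=
  sInf ((fun ξ => (⟪ξ, ξ⟫ - (n : ℝ)) / 4) '' CharSet Λ)

/-- The two defects `d_±(L) = min_{ξ ∈ Char_±(L)} (ξ·ξ − n)/4` of a bimodular lattice. -/
def defectSign {n : ℕ} (Λ : Set (EuclideanSpace ℝ (Fin n))) (ε : ℤ) : ℝ :=
  sInf ((fun ξ => (⟪ξ, ξ⟫ - (n : ℝ)) / 4) '' CharSign Λ ε)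

/-- The juxtaposition `(x, y) ∈ ℝ^n × ℝ^m = ℝ^{n+m}`. -/
def pairE {n m : ℕ} (x : EuclideanSpace ℝ (Fin n)) (y : EuclideanSpace ℝ (Fin m)) :
    EuclideanSpace ℝ (Fin (n + m)) :=
  (EuclideanSpace.equiv (Fin (n + m)) ℝ).symm
    (Fin.append (EuclideanSpace.equiv (Fin n) ℝ x) (EuclideanSpace.equiv (Fin m) ℝ y))

/-- The first component `ℝ^{n+m} → ℝ^n` of a covector. -/
def restFst {n m : ℕ} (ξ : EuclideanSpace ℝ (Fin (n + m))) : EuclideanSpace ℝ (Fin n) :=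
  (EuclideanSpace.equiv (Fin n) ℝ).symm
    (fun i => EuclideanSpace.equiv (Fin (n + m)) ℝ ξ (Fin.castAdd m i))

/-- The second component `ℝ^{n+m} → ℝ^m` of a covector. -/
def restSnd {n m : ℕ} (ξ : EuclideanSpace ℝ (Fin (n + m))) : EuclideanSpace ℝ (Fin m) :=
  (EuclideanSpace.equiv (Fin m) ℝ).symm
    (fun i => EuclideanSpace.equiv (Fin (n + m)) ℝ ξ (Fin.natAdd n i))

/-- The orthogonal direct sum `L ⊕ A ⊂ ℝ^{n+m}`, i.e. the subgroup `L × A`. -/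
def prodSet {n m : ℕ} (L : Set (EuclideanSpace ℝ (Fin n))) (A : Set (EuclideanSpace ℝ (Fin m))) :
    Set (EuclideanSpace ℝ (Fin (n + m))) :=
  {z | ∃ x ∈ L, ∃ y ∈ A, z = pairE x y}

/-- The overlattice `U_A = (L × A) ∪ ((L' \ L) × (A' \ A)) ⊂ ℝ^{n+m}`. -/
def overLattice {n m : ℕ} (L : Set (EuclideanSpace ℝ (Fin n)))
    (A : Set (EuclideanSpace ℝ (Fin m))) : Set (EuclideanSpace ℝ (Fin (n + m))) :=
  prodSet L A ∪ prodSet (dualSet L \ L) (dualSet A \ A)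

/-- The standard lattice `I^n = ℤ^n ⊂ ℝ^n`. -/
def stdLattice (n : ℕ) : Set (EuclideanSpace ℝ (Fin n)) :=
  {x | ∀ i : Fin n, ∃ k : ℤ, x i = (k : ℝ)}

/-- A lattice is diagonal if it admits a `ℤ`-basis with Gram matrix `diag(1, …, 1, 2)`,
i.e. it is isomorphic to `Δ_n = I^{n-1} ⊕ A_1`. -/
def IsDiagonal {n : ℕ} (Λ : Set (EuclideanSpace ℝ (Fin n))) : Prop :=
  ∃ b : Fin n → EuclideanSpace ℝ (Fin n),
    (∀ i, b i ∈ Λ) ∧ LinearIndependent ℤ b ∧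
    (∀ x ∈ Λ, ∃ c : Fin n → ℤ, x = ∑ i, (c i : ℝ) • b i) ∧
    (∀ i j : Fin n, ⟪b i, b j⟫ =
      if i = j then (if (i : ℕ) = n - 1 then 2 else 1) else 0)

/-- A lattice has an orthonormal `ℤ`-basis iff it is isomorphic to the standard lattice `I^n`. -/
def HasOrthonormalZBasis {n : ℕ} (Λ : Set (EuclideanSpace ℝ (Fin n))) : Prop :=
  ∃ b : Fin n → EuclideanSpace ℝ (Fin n),
    (∀ i, b i ∈ Λ) ∧ LinearIndependent ℤ b ∧
    (∀ x ∈ Λ, ∃ c : Fin n → ℤ, x = ∑ i, (c i : ℝ) • b i) ∧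
    (∀ i j : Fin n, ⟪b i, b j⟫ = if i = j then 1 else 0)

local notation "𝔼" n:max => EuclideanSpace ℝ (Fin n)

section Juxtaposition

variable {n m : ℕ}

@[simp]
theorem pairE_apply_castAdd (x : 𝔼 n) (y : 𝔼 m) (i : Fin n) :
    pairE x y (Fin.castAdd m i) = x i := by
  simp [pairE, EuclideanSpace.equiv]

@[simp]
theorem pairE_apply_natAdd (x : 𝔼 n) (y : 𝔼 m) (i : Fin m) :
    pairE x y (Fin.natAdd n i) = y i := by
  simp [pairE, EuclideanSpace.equiv]

theorem pairE_ext {z z' : 𝔼 (n + m)} (h₁ : ∀ i, z (Fin.castAdd m i) = z' (Fin.castAdd m i))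
    (h₂ : ∀ i, z (Fin.natAdd n i) = z' (Fin.natAdd n i)) : z = z' := by
  ext i
  cases i using Fin.addCases with
  | left i => exact h₁ i
  | right i => exact h₂ i

theorem inner_pairE_pairE (x x' : 𝔼 n) (y y' : 𝔼 m) :
    ⟪pairE x y, pairE x' y'⟫ = ⟪x, x'⟫ + ⟪y, y'⟫ := by
  simp only [PiLp.inner_apply, Fin.sum_univ_add, pairE_apply_castAdd, pairE_apply_natAdd]

theorem pairE_zero : pairE (0 : 𝔼 n) (0 : 𝔼 m) = 0 :=
  pairE_ext (by simp) (by simp)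

theorem pairE_add (x x' : 𝔼 n) (y y' : 𝔼 m) :
    pairE x y + pairE x' y' = pairE (x + x') (y + y') :=
  pairE_ext (by simp) (by simp)

theorem pairE_neg (x : 𝔼 n) (y : 𝔼 m) : -pairE x y = pairE (-x) (-y) :=
  pairE_ext (by simp) (by simp)

theorem restFst_pairE (x : 𝔼 n) (y : 𝔼 m) : restFst (pairE x y) = x := by
  ext i
  simp [restFst, EuclideanSpace.equiv]

theorem restFst_sum {ι : Type*} (s : Finset ι) (c : ι → ℝ) (v : ι → 𝔼 (n + m)) :
    restFst (∑ i ∈ s, c i • v i) = ∑ i ∈ s, c i • restFst (v i) := by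
  ext j
  simp [restFst, EuclideanSpace.equiv]

end Juxtaposition

theorem exists_pair_of_sum_sq_eq_two {ι : Type*} [Fintype ι] [DecidableEq ι] {c : ι → ℤ}
    (h : ∑ i, c i ^ 2 = 2) :
    (∀ i, c i = 0 ∨ c i ^ 2 = 1) ∧ ∃ i₀ i₁, i₀ ≠ i₁ ∧ ∀ i, c i ≠ 0 ↔ i = i₀ ∨ i = i₁ := by
  have hsq : ∀ i, c i ^ 2 = if c i = 0 then 0 else 1 := by
    intro i
    have hle : c i ^ 2 ≤ 2 :=
      h ▸ Finset.single_le_sum (fun j _ => sq_nonneg (c j)) (Finset.mem_univ i)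
    obtain ⟨h₁, h₂⟩ : -1 ≤ c i ∧ c i ≤ 1 := ⟨by nlinarith, by nlinarith⟩
    interval_cases c i <;> rfl
  refine ⟨fun i => ?_, ?_⟩
  · rw [hsq]
    split_ifs <;> simp_all
  have hcard : (Finset.univ.filter fun i => c i ≠ 0).card = 2 := by
    suffices ((Finset.univ.filter fun i => c i ≠ 0).card : ℤ) = 2 by exact_mod_cast this
    rw [Finset.card_filter, ← h]
    push_cast
    exact Finset.sum_congr rfl fun i _ => by rw [hsq]; split_ifs <;> simp_all
  obtain ⟨i₀, i₁, hne, hsupp⟩ := Finset.card_eq_two.1 hcard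
  exact ⟨i₀, i₁, hne, fun i => by simpa using congrArg (i ∈ ·) hsupp⟩

theorem sum_smul_eq_sum_ne_of_eq_neg {E ι : Type*} [AddCommGroup E] [Module ℝ E] [Fintype ι]
    [DecidableEq ι] {e : ι → E} {a : ι → ℝ} {i₀ i₁ : ι} (hne : i₀ ≠ i₁) (ha : a i₁ = -a i₀) :
    ∑ i, a i • e i =
      ∑ k : {k // k ≠ i₁}, a k • if k = ⟨i₀, hne⟩ then e i₀ - e i₁ else e k := by
  have hi₀ : i₀ ∈ Finset.univ.erase i₁ := Finset.mem_erase.2 ⟨hne, Finset.mem_univ _⟩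
  calc ∑ i, a i • e i
      = ∑ i ∈ Finset.univ.erase i₁, (a i • e i - if i = i₀ then a i₀ • e i₁ else 0) := by
        rw [Finset.sum_sub_distrib, Finset.sum_ite_eq' _ _ _, if_pos hi₀,
          ← Finset.add_sum_erase _ _ (Finset.mem_univ i₁), ha, neg_smul]
        abel
    _ = _ := by
        rw [Finset.sum_subtype (p := (· ≠ i₁)) _ fun i => by simp]
        refine Finset.sum_congr rfl fun k _ => ?_
        simp only [Subtype.ext_iff]
        split_ifs with h
        · rw [h, smul_sub]
        · rw [sub_zero]

section OrthogonalZBasis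

variable {E ι κ : Type*} [NormedAddCommGroup E] [InnerProductSpace ℝ E] [Fintype ι] [DecidableEq ι]
  [Fintype κ] [DecidableEq κ]

/-- `b` is a `ℤ`-basis of `Λ` with Gram matrix `diag d`; linear independence is not recorded, as it
follows from the Gram matrix whenever `d` has no zero entry. -/
structure IsOrthogonalZBasis (Λ : Set E) (b : ι → E) (d : ι → ℝ) : Prop where
  mem : ∀ i, b i ∈ Λ
  exists_eq_sum : ∀ x ∈ Λ, ∃ c : ι → ℤ, x = ∑ i, (c i : ℝ) • b i
  inner_eq : ∀ i j, ⟪b i, b j⟫ = if i = j then d i else 0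

namespace IsOrthogonalZBasis

variable {Λ : Set E} {b : ι → E} {d : ι → ℝ}

theorem inner_sum (hb : IsOrthogonalZBasis Λ b d) (c : ι → ℝ) (j : ι) :
    ⟪b j, ∑ i, c i • b i⟫ = c j * d j := by
  simp [_root_.inner_sum, real_inner_smul_right, hb.inner_eq, mul_comm]

theorem linearIndependent (hb : IsOrthogonalZBasis Λ b d) (hd : ∀ i, d i ≠ 0) :
    LinearIndependent ℤ b := by
  refine (linearIndependent_of_ne_zero_of_inner_eq_zero (𝕜 := ℝ) (fun i h => hd i ?_)
    fun i j hij => ?_).restrict_scalars' ℤ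
  · simpa [h, eq_comm] using hb.inner_eq i i
  · simpa [hij] using hb.inner_eq i j

theorem comp_equiv (hb : IsOrthogonalZBasis Λ b d) (e : κ ≃ ι) :
    IsOrthogonalZBasis Λ (b ∘ e) (d ∘ e) where
  mem i := hb.mem (e i)
  exists_eq_sum x hx := by
    obtain ⟨c, rfl⟩ := hb.exists_eq_sum x hx
    exact ⟨c ∘ e, (e.sum_comp fun i => (c i : ℝ) • b i).symm⟩
  inner_eq i j := by simp [hb.inner_eq]

theorem zsmul {U : AddSubgroup E} (hb : IsOrthogonalZBasis (U : Set E) b d) (ε : ι → ℤ)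
    (hε : ∀ i, ε i ^ 2 = 1) : IsOrthogonalZBasis (U : Set E) (fun i => (ε i : ℝ) • b i) d where
  mem i := by simpa [Int.cast_smul_eq_zsmul] using U.zsmul_mem (hb.mem i) (ε i)
  exists_eq_sum x hx := by
    obtain ⟨c, rfl⟩ := hb.exists_eq_sum x hx
    refine ⟨fun i => c i * ε i, Finset.sum_congr rfl fun i _ => ?_⟩
    have : (ε i : ℝ) * ε i = 1 := by exact_mod_cast (sq (ε i)).symm.trans (hε i)
    rw [smul_smul, Int.cast_mul, mul_assoc, this, mul_one]
  inner_eq i j := by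
    have : (ε i : ℝ) * ε i = 1 := by exact_mod_cast (sq (ε i)).symm.trans (hε i)
    rw [real_inner_smul_left, real_inner_smul_right, hb.inner_eq]
    split_ifs with h
    · subst h; rw [← mul_assoc, this, one_mul]
    · simp

theorem exists_eq_add_of_inner_self_eq_two {U : AddSubgroup E} {e : ι → E}
    (he : IsOrthogonalZBasis (U : Set E) e fun _ => 1) {w : E} (hw : w ∈ U) (hww : ⟪w, w⟫ = 2) :
    ∃ e' : ι → E, IsOrthogonalZBasis (U : Set E) e' (fun _ => 1) ∧
      ∃ i₀ i₁, i₀ ≠ i₁ ∧ w = e' i₀ + e' i₁ := by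
  obtain ⟨c, hc⟩ := he.exists_eq_sum w hw
  have hcw : ∀ i, ⟪e i, w⟫ = c i := fun i => by rw [hc, he.inner_sum, mul_one]
  have hsq : ∑ i, c i ^ 2 = 2 := by
    have : ⟪w, w⟫ = ∑ i, (c i : ℝ) ^ 2 := by
      nth_rw 1 [hc]
      simp only [sum_inner, real_inner_smul_left, hcw, sq]
    exact_mod_cast this.symm.trans hww
  obtain ⟨hunit, i₀, i₁, hne, hsupp⟩ := exists_pair_of_sum_sq_eq_two hsq
  -- flip the signs of `e i₀` and `e i₁` to make both coefficients of `w` equal to `1`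
  let ε i := if c i = 0 then 1 else c i
  have hε : ∀ i, ε i ^ 2 = 1 := fun i => by
    rcases hunit i with hi | hi <;> simp [ε, hi]
  refine ⟨_, he.zsmul ε hε, i₀, i₁, hne, ?_⟩
  have hc₀ : c i₀ ≠ 0 := (hsupp i₀).2 (Or.inl rfl)
  have hc₁ : c i₁ ≠ 0 := (hsupp i₁).2 (Or.inr rfl)
  rw [hc, Fintype.sum_eq_add i₀ i₁ hne fun i hi => ?_]
  · simp [ε, hc₀, hc₁]
  · simp [not_not.1 (mt (hsupp i).1 (not_or.2 hi))]

theorem orthogonal_add {U : AddSubgroup E} {e : ι → E}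
    (he : IsOrthogonalZBasis (U : Set E) e fun _ => 1) {i₀ i₁ : ι} (hne : i₀ ≠ i₁) :
    IsOrthogonalZBasis {z | z ∈ U ∧ ⟪z, e i₀ + e i₁⟫ = 0}
      (fun k : {k // k ≠ i₁} => if k = ⟨i₀, hne⟩ then e i₀ - e i₁ else e k)
      (fun k => if k = ⟨i₀, hne⟩ then 2 else 1) where
  mem k := by
    by_cases hk : k = ⟨i₀, hne⟩
    · simp only [hk, if_true]
      refine ⟨U.sub_mem (he.mem _) (he.mem _), ?_⟩
      simp only [inner_sub_left, inner_add_right, he.inner_eq]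
      simp [hne, hne.symm]
    · have hk' : (k : ι) ≠ i₀ := fun h => hk (Subtype.ext h)
      simp only [hk, if_false]
      refine ⟨he.mem _, ?_⟩
      simp [inner_add_right, he.inner_eq, hk', k.2]
  inner_eq k l := by
    have hk : (k : ι) ≠ i₁ := k.2
    have hl : (l : ι) ≠ i₁ := l.2
    simp only [Subtype.ext_iff]
    split_ifs <;> simp only [inner_sub_left, inner_sub_right, he.inner_eq] <;> simp_all [eq_comm]
    norm_num
  exists_eq_sum z hz := by
    obtain ⟨hzU, hzw⟩ := hz
    obtain ⟨a, rfl⟩ := he.exists_eq_sum z hzU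
    have ha : (a i₁ : ℝ) = -a i₀ := by
      rw [inner_add_right, real_inner_comm, he.inner_sum, real_inner_comm, he.inner_sum] at hzw
      linarith
    exact ⟨fun k => a k, sum_smul_eq_sum_ne_of_eq_neg hne ha⟩

end IsOrthogonalZBasis

theorem isOrthogonalZBasis_of_orthonormal [FiniteDimensional ℝ E] {Λ : Set E} {u : ι → E}
    (hu : Orthonormal ℝ u) (hcard : Fintype.card ι = Module.finrank ℝ E) (hmem : ∀ i, u i ∈ Λ)
    (hint : ∀ i, ∀ z ∈ Λ, ∃ k : ℤ, ⟪u i, z⟫ = k) : IsOrthogonalZBasis Λ u fun _ => 1 where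
  mem := hmem
  exists_eq_sum z hz := by
    choose c hc using fun i => hint i z hz
    have hspan : ⊤ ≤ Submodule.span ℝ (Set.range u) :=
      (hu.linearIndependent.span_eq_top_of_card_eq_finrank' hcard).ge
    refine ⟨c, ?_⟩
    conv_lhs => rw [← (OrthonormalBasis.mk hu hspan).sum_repr' z]
    simp [hc]
  inner_eq := orthonormal_iff_ite.1 hu

end OrthogonalZBasis

section FinIndexed

variable {n : ℕ} {Λ : Set (𝔼 n)}

theorem hasOrthonormalZBasis_iff :
    HasOrthonormalZBasis Λ ↔ ∃ b : Fin n → 𝔼 n, IsOrthogonalZBasis Λ b fun _ => 1 := by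
  constructor
  · rintro ⟨b, hmem, -, hsum, hinner⟩
    exact ⟨b, hmem, hsum, hinner⟩
  · rintro ⟨b, hb⟩
    exact ⟨b, hb.mem, hb.linearIndependent fun _ => one_ne_zero, hb.exists_eq_sum, hb.inner_eq⟩

theorem isDiagonal_iff : IsDiagonal Λ ↔
    ∃ b : Fin n → 𝔼 n, IsOrthogonalZBasis Λ b fun i => if (i : ℕ) = n - 1 then 2 else 1 := by
  constructor
  · rintro ⟨b, hmem, -, hsum, hinner⟩
    exact ⟨b, hmem, hsum, hinner⟩
  · rintro ⟨b, hb⟩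
    refine ⟨b, hb.mem, hb.linearIndependent fun i => ?_, hb.exists_eq_sum, hb.inner_eq⟩
    split_ifs <;> norm_num

theorem isDiagonal_of_isOrthogonalZBasis {ι : Type*} [Fintype ι] [DecidableEq ι]
    (hcard : Fintype.card ι = n) {b : ι → 𝔼 n} {p : ι}
    (hb : IsOrthogonalZBasis Λ b fun i => if i = p then 2 else 1) : IsDiagonal Λ := by
  have hn : n - 1 < n := Nat.sub_lt (hcard ▸ Fintype.card_pos_iff.2 ⟨p⟩) one_pos
  let f := Fintype.equivFinOfCardEq hcard
  let σ : ι ≃ Fin n := f.trans (Equiv.swap (f p) ⟨n - 1, hn⟩)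
  have hσ : σ p = ⟨n - 1, hn⟩ := by simp [σ]
  have hd : (fun i => if i = p then (2 : ℝ) else 1) ∘ σ.symm =
      fun i : Fin n => if (i : ℕ) = n - 1 then 2 else 1 := by
    funext i
    simp only [Function.comp, Equiv.symm_apply_eq, hσ, Fin.ext_iff]
  exact isDiagonal_iff.2 ⟨_, hd ▸ hb.comp_equiv σ.symm⟩

theorem IsDiagonal.exists_isOrthogonalZBasis (h : IsDiagonal Λ) (hn : 0 < n) :
    ∃ (b : Fin n → 𝔼 n) (p : Fin n), IsOrthogonalZBasis Λ b fun i => if i = p then 2 else 1 := by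
  obtain ⟨b, hb⟩ := isDiagonal_iff.1 h
  refine ⟨b, ⟨n - 1, Nat.sub_lt hn one_pos⟩, ?_⟩
  simpa only [Fin.ext_iff] using hb

end FinIndexed

section Lattices

variable {n : ℕ} {L : Set (𝔼 n)} {x y : 𝔼 n}

theorem add_mem_dualSet (hx : x ∈ dualSet L) (hy : y ∈ dualSet L) : x + y ∈ dualSet L :=
  fun v hv => by
    obtain ⟨k, hk⟩ := hx v hv
    obtain ⟨k', hk'⟩ := hy v hv
    exact ⟨k + k', by rw [inner_add_left, hk, hk']; push_cast; rfl⟩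

theorem neg_mem_dualSet (hx : x ∈ dualSet L) : -x ∈ dualSet L :=
  fun v hv => by
    obtain ⟨k, hk⟩ := hx v hv
    exact ⟨-k, by rw [inner_neg_left, hk]; push_cast; rfl⟩

theorem IsLattice.neg_mem_dualSet_diff (hL : IsLattice L) (hx : x ∈ dualSet L \ L) :
    -x ∈ dualSet L \ L :=
  ⟨neg_mem_dualSet hx.1, fun h => hx.2 (neg_neg x ▸ hL.1.2.2 _ h)⟩

theorem IsLattice.subset_dualSet (hL : IsLattice L) : L ⊆ dualSet L :=
  fun v hv w hw => hL.2.2.2 v hv w hw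

def IsLattice.toAddSubgroup (hL : IsLattice L) : AddSubgroup (𝔼 n) where
  carrier := L
  zero_mem' := hL.1.1
  add_mem' ha hb := hL.1.2.1 _ ha _ hb
  neg_mem' ha := hL.1.2.2 _ ha

theorem IsBimodular.pos (hL : IsBimodular L) : 0 < n := by
  obtain ⟨⟨⟨h0, -⟩, -⟩, w, ⟨-, hw⟩, -⟩ := hL
  refine Nat.pos_of_ne_zero fun hn => hw ?_
  subst hn
  exact Subsingleton.elim 0 w ▸ h0

theorem IsBimodular.add_mem_iff (hL : IsBimodular L) (hx : x ∈ dualSet L) (hy : y ∈ dualSet L) :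
    x + y ∈ L ↔ (x ∈ L ↔ y ∈ L) := by
  let G := hL.1.toAddSubgroup
  change x + y ∈ G ↔ (x ∈ G ↔ y ∈ G)
  by_cases hxL : x ∈ G
  · simp [hxL, G.add_mem_cancel_left hxL]
  by_cases hyL : y ∈ G
  · simp [hxL, hyL, G.add_mem_cancel_right hyL]
  obtain ⟨w, ⟨hwD, hwL⟩, hidx⟩ := hL.2
  have hxw : x - w ∈ G := (hidx x hx).resolve_left hxL
  have hyw : y - w ∈ G := (hidx y hy).resolve_left hyL
  have hww : w + w ∈ G := (hidx _ (add_mem_dualSet hwD hwD)).resolve_right (by simpa using hwL)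
  simpa [hxL, hyL, show x + y = (x - w) + (y - w) + (w + w) by abel] using
    G.add_mem (G.add_mem hxw hyw) hww

theorem IsBimodular.exists_inner_eq_add_half (hL : IsBimodular L) {h : 𝔼 n}
    (hh : h ∈ dualSet L \ L) (hhh : ∃ k : ℤ, ⟪h, h⟫ = k + 2⁻¹) (hx : x ∈ dualSet L \ L)
    (hy : y ∈ dualSet L \ L) : ∃ k : ℤ, ⟪x, y⟫ = k + 2⁻¹ := by
  have hsub : ∀ {z}, z ∈ dualSet L \ L → z - h ∈ L := fun {z} hz => by
    rw [sub_eq_add_neg, hL.add_mem_iff hz.1 (neg_mem_dualSet hh.1)]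
    exact iff_of_false hz.2 fun hn => hh.2 (neg_neg h ▸ hL.1.1.2.2 _ hn)
  obtain ⟨k₁, hk₁⟩ := hL.1.2.2.2 _ (hsub hx) _ (hsub hy)
  obtain ⟨k₂, hk₂⟩ := hh.1 _ (hsub hx)
  obtain ⟨k₃, hk₃⟩ := hh.1 _ (hsub hy)
  obtain ⟨k₄, hk₄⟩ := hhh
  have hxy : ⟪x, y⟫ = ⟪x - h, y - h⟫ + ⟪h, x - h⟫ + ⟪h, y - h⟫ + ⟪h, h⟫ := by
    simp only [inner_sub_left, inner_sub_right, real_inner_comm h x]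
    ring
  exact ⟨k₁ + k₂ + k₃ + k₄, by rw [hxy, hk₁, hk₂, hk₃, hk₄]; push_cast; ring⟩

end Lattices

theorem IsOrthogonalZBasis.half_smul_mem_dualSet_diff {n : ℕ} {ι : Type*} [Fintype ι]
    [DecidableEq ι] {Λ : Set (𝔼 n)} {b : ι → 𝔼 n} {d : ι → ℝ} (hb : IsOrthogonalZBasis Λ b d)
    {p : ι} (hp : d p = 2) : (2⁻¹ : ℝ) • b p ∈ dualSet Λ \ Λ := by
  refine ⟨fun v hv => ?_, fun hmem => ?_⟩
  · obtain ⟨c, rfl⟩ := hb.exists_eq_sum v hv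
    exact ⟨c p, by rw [real_inner_smul_left, hb.inner_sum, hp]; ring⟩
  · obtain ⟨c, hc⟩ := hb.exists_eq_sum _ hmem
    have h := congrArg (⟪b p, ·⟫) hc
    simp only [real_inner_smul_right, hb.inner_sum, hb.inner_eq, if_pos, hp] at h
    have : (1 : ℤ) = c p * 2 := by exact_mod_cast (by linarith : (1 : ℝ) = c p * 2)
    omega

theorem eq_inner_div_smul_of_finrank_eq_one {E : Type*} [NormedAddCommGroup E]
    [InnerProductSpace ℝ E] (hE : Module.finrank ℝ E = 1) {r : E} (hr : r ≠ 0) (y : E) :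
    y = (⟪y, r⟫ / ⟪r, r⟫) • r := by
  obtain ⟨c, rfl⟩ := (finrank_eq_one_iff_of_nonzero' r hr).1 hE y
  rw [real_inner_smul_left, mul_div_assoc, div_self (inner_self_ne_zero.2 hr), mul_one]

section RootLattice

variable {r : 𝔼 1}

theorem isOrthogonalZBasis_zmultiples (hr : ⟪r, r⟫ = 2) :
    IsOrthogonalZBasis {x | ∃ k : ℤ, x = (k : ℝ) • r} (fun _ : Fin 1 => r) fun _ => 2 where
  mem _ := ⟨1, by simp⟩
  exists_eq_sum := by
    rintro _ ⟨k, rfl⟩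
    exact ⟨fun _ => k, by simp⟩
  inner_eq i j := by rw [Subsingleton.elim i j, if_pos rfl, hr]

theorem isBimodular_zmultiples (hr : ⟪r, r⟫ = 2) : IsBimodular {x | ∃ k : ℤ, x = (k : ℝ) • r} := by
  have hr0 : r ≠ 0 := fun h => by simp [h] at hr
  have hrecon := eq_inner_div_smul_of_finrank_eq_one (finrank_euclideanSpace_fin) hr0
  have hb := isOrthogonalZBasis_zmultiples hr
  refine ⟨⟨⟨⟨0, by simp⟩, ?_, ?_⟩, ⟨_, hb.mem, hb.linearIndependent (by simp), hb.exists_eq_sum⟩,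
    ?_, ?_⟩, _, hb.half_smul_mem_dualSet_diff (p := 0) rfl, ?_⟩
  · rintro _ ⟨k, rfl⟩ _ ⟨k', rfl⟩
    exact ⟨k + k', by push_cast; rw [add_smul]⟩
  · rintro _ ⟨k, rfl⟩
    exact ⟨-k, by push_cast; rw [neg_smul]⟩
  · refine eq_top_iff.2 fun y _ => ?_
    rw [hrecon y]
    exact Submodule.smul_mem _ _ (Submodule.subset_span (hb.mem 0))
  · rintro _ ⟨k, rfl⟩ _ ⟨k', rfl⟩
    exact ⟨k * k' * 2, by rw [real_inner_smul_left, real_inner_smul_right, hr]; push_cast; ring⟩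
  · intro x hx
    obtain ⟨k, hk⟩ := hx r (hb.mem 0)
    rw [hrecon x, hk, hr]
    obtain ⟨j, rfl | rfl⟩ := Int.even_or_odd' k
    · exact Or.inl ⟨j, by push_cast; ring_nf⟩
    · exact Or.inr ⟨j, by push_cast; rw [← sub_smul]; ring_nf⟩

end RootLattice

section OverLattice

variable {n m : ℕ} {L : Set (𝔼 n)} {A : Set (𝔼 m)} {z z' : 𝔼 (n + m)}

theorem mem_overLattice_iff (hL : L ⊆ dualSet L) (hA : A ⊆ dualSet A) :
    z ∈ overLattice L A ↔
      ∃ x ∈ dualSet L, ∃ y ∈ dualSet A, (x ∈ L ↔ y ∈ A) ∧ z = pairE x y := by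
  constructor
  · rintro (⟨x, hx, y, hy, rfl⟩ | ⟨x, hx, y, hy, rfl⟩)
    · exact ⟨x, hL hx, y, hA hy, iff_of_true hx hy, rfl⟩
    · exact ⟨x, hx.1, y, hy.1, iff_of_false hx.2 hy.2, rfl⟩
  · rintro ⟨x, hx, y, hy, hxy, rfl⟩
    by_cases h : x ∈ L
    · exact Or.inl ⟨x, h, y, hxy.1 h, rfl⟩
    · exact Or.inr ⟨x, ⟨hx, h⟩, y, ⟨hy, mt hxy.2 h⟩, rfl⟩

theorem overLattice_add_mem (hL : IsBimodular L) (hA : IsBimodular A) (hz : z ∈ overLattice L A)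
    (hz' : z' ∈ overLattice L A) : z + z' ∈ overLattice L A := by
  rw [mem_overLattice_iff hL.1.subset_dualSet hA.1.subset_dualSet] at *
  obtain ⟨x, hx, y, hy, hxy, rfl⟩ := hz
  obtain ⟨x', hx', y', hy', hxy', rfl⟩ := hz'
  refine ⟨x + x', add_mem_dualSet hx hx', y + y', add_mem_dualSet hy hy', ?_, pairE_add ..⟩
  rw [hL.add_mem_iff hx hx', hA.add_mem_iff hy hy', hxy, hxy']

theorem overLattice_neg_mem (hL : IsLattice L) (hA : IsLattice A) (hz : z ∈ overLattice L A) :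
    -z ∈ overLattice L A := by
  rw [mem_overLattice_iff hL.subset_dualSet hA.subset_dualSet] at *
  obtain ⟨x, hx, y, hy, hxy, rfl⟩ := hz
  refine ⟨-x, neg_mem_dualSet hx, -y, neg_mem_dualSet hy, ?_, pairE_neg ..⟩
  exact hL.toAddSubgroup.neg_mem_iff.trans (hxy.trans hA.toAddSubgroup.neg_mem_iff.symm)

def overLatticeAddSubgroup (hL : IsBimodular L) (hA : IsBimodular A) : AddSubgroup (𝔼 (n + m)) where
  carrier := overLattice L A
  zero_mem' := Or.inl ⟨0, hL.1.1.1, 0, hA.1.1.1, pairE_zero.symm⟩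
  add_mem' := overLattice_add_mem hL hA
  neg_mem' := overLattice_neg_mem hL.1 hA.1

/-- The discriminant forms of `L` and `A` are `1/2` on the nontrivial class (`hL₂`, `hA₂`), so on
`(L' \ L) × (A' \ A)` the two halves add up to an integer. -/
theorem overLattice_subset_dualSet (hL : L ⊆ dualSet L) (hA : A ⊆ dualSet A)
    (hL₂ : ∀ x ∈ dualSet L \ L, ∀ x' ∈ dualSet L \ L, ∃ k : ℤ, ⟪x, x'⟫ = k + 2⁻¹)
    (hA₂ : ∀ y ∈ dualSet A \ A, ∀ y' ∈ dualSet A \ A, ∃ k : ℤ, ⟪y, y'⟫ = k + 2⁻¹) :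
    overLattice L A ⊆ dualSet (overLattice L A) := by
  rintro _ (⟨x, hx, y, hy, rfl⟩ | ⟨x, hx, y, hy, rfl⟩) _
    (⟨x', hx', y', hy', rfl⟩ | ⟨x', hx', y', hy', rfl⟩) <;> rw [inner_pairE_pairE]
  · obtain ⟨k, hk⟩ := hL hx x' hx'
    obtain ⟨k', hk'⟩ := hA hy y' hy'
    exact ⟨k + k', by rw [hk, hk']; push_cast; rfl⟩
  · obtain ⟨k, hk⟩ := hx'.1 x hx
    obtain ⟨k', hk'⟩ := hy'.1 y hy
    exact ⟨k + k', by rw [real_inner_comm, hk, real_inner_comm, hk']; push_cast; rfl⟩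
  · obtain ⟨k, hk⟩ := hx.1 x' hx'
    obtain ⟨k', hk'⟩ := hy.1 y' hy'
    exact ⟨k + k', by rw [hk, hk']; push_cast; rfl⟩
  · obtain ⟨k, hk⟩ := hL₂ x hx x' hx'
    obtain ⟨k', hk'⟩ := hA₂ y hy y' hy'
    exact ⟨k + k' + 1, by rw [hk, hk']; push_cast; ring⟩

theorem mem_overLattice_and_inner_eq_zero_iff {A : Set (𝔼 1)} (hA : (0 : 𝔼 1) ∈ A) {r : 𝔼 1}
    (hr : r ≠ 0) {z : 𝔼 (n + 1)} :
    z ∈ overLattice L A ∧ ⟪z, pairE 0 r⟫ = 0 ↔ ∃ x ∈ L, z = pairE x 0 := by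
  have hy : ∀ y : 𝔼 1, ⟪y, r⟫ = 0 → y = 0 := fun y h => by
    rw [eq_inner_div_smul_of_finrank_eq_one finrank_euclideanSpace_fin hr y, h, zero_div, zero_smul]
  constructor
  · rintro ⟨⟨x, hx, y, -, rfl⟩ | ⟨x, -, y, ⟨-, hyA⟩, rfl⟩, h⟩ <;>
      rw [inner_pairE_pairE, inner_zero_right, zero_add] at h
    · exact ⟨x, hx, by rw [hy y h]⟩
    · exact absurd (hy y h ▸ hA) hyA
  · rintro ⟨x, hx, rfl⟩
    exact ⟨Or.inl ⟨x, hx, 0, hA, rfl⟩, by simp [inner_pairE_pairE]⟩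

end OverLattice

theorem IsOrthogonalZBasis.map_restFst {n m : ℕ} {ι : Type*} [Fintype ι] [DecidableEq ι]
    {Λ : Set (𝔼 n)} {K : Set (𝔼 (n + m))} {b : ι → 𝔼 (n + m)} {d : ι → ℝ}
    (hK : ∀ z, z ∈ K ↔ ∃ x ∈ Λ, z = pairE x 0) (hb : IsOrthogonalZBasis K b d) :
    IsOrthogonalZBasis Λ (fun i => restFst (b i)) d := by
  choose x hxΛ hx using fun i => (hK (b i)).1 (hb.mem i)
  refine ⟨fun i => ?_, fun y hy => ?_, fun i j => ?_⟩
  · rw [hx, restFst_pairE]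
    exact hxΛ i
  · obtain ⟨c, hc⟩ := hb.exists_eq_sum _ ((hK _).2 ⟨y, hy, rfl⟩)
    exact ⟨c, by rw [← restFst_sum, ← hc, restFst_pairE]⟩
  · rw [← hb.inner_eq, hx, hx, inner_pairE_pairE, restFst_pairE, restFst_pairE, inner_zero_left,
      add_zero]

theorem IsBimodular.overLattice_zmultiples_subset_dualSet {n : ℕ} {L : Set (𝔼 n)}
    (hL : IsBimodular L) {h : 𝔼 n} (hh : h ∈ dualSet L \ L) (hhh : ⟪h, h⟫ = 2⁻¹) {r : 𝔼 1}
    (hr : ⟪r, r⟫ = 2) :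
    overLattice L {x | ∃ k : ℤ, x = (k : ℝ) • r} ⊆
      dualSet (overLattice L {x | ∃ k : ℤ, x = (k : ℝ) • r}) := by
  have hA := isBimodular_zmultiples hr
  have hs := (isOrthogonalZBasis_zmultiples hr).half_smul_mem_dualSet_diff (p := 0) rfl
  have hss : ⟪(2⁻¹ : ℝ) • r, (2⁻¹ : ℝ) • r⟫ = 2⁻¹ := by
    rw [real_inner_smul_left, real_inner_smul_right, hr]; norm_num
  exact overLattice_subset_dualSet hL.1.subset_dualSet hA.1.subset_dualSet
    (fun x hx x' hx' => hL.exists_inner_eq_add_half hh ⟨0, by rw [hhh]; norm_num⟩ hx hx')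
    (fun y hy y' hy' => hA.exists_inner_eq_add_half hs ⟨0, by rw [hss]; norm_num⟩ hy hy')

theorem exists_isOrthogonalZBasis_overLattice {n : ℕ} {L : Set (𝔼 n)} (hL : IsBimodular L)
    {ι : Type*} [Fintype ι] [DecidableEq ι] (hcard : Fintype.card ι = n) {b : ι → 𝔼 n} {p : ι}
    (hb : IsOrthogonalZBasis L b fun i => if i = p then 2 else 1) {r : 𝔼 1} (hr : ⟪r, r⟫ = 2) :
    ∃ u : Option ι → 𝔼 (n + 1),
      IsOrthogonalZBasis (overLattice L {x | ∃ k : ℤ, x = (k : ℝ) • r}) u fun _ => 1 := by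
  have hA := isBimodular_zmultiples hr
  set h := (2⁻¹ : ℝ) • b p
  set s := (2⁻¹ : ℝ) • r
  have hh : h ∈ dualSet L \ L := hb.half_smul_mem_dualSet_diff (by simp)
  have hs : s ∈ dualSet _ \ _ := (isOrthogonalZBasis_zmultiples hr).half_smul_mem_dualSet_diff
    (p := 0) rfl
  have hhh : ⟪h, h⟫ = 2⁻¹ := by
    rw [real_inner_smul_left, real_inner_smul_right, hb.inner_eq]; norm_num
  have hss : ⟪s, s⟫ = 2⁻¹ := by
    rw [real_inner_smul_left, real_inner_smul_right, hr]; norm_num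
  let u : Option ι → 𝔼 (n + 1) := fun o =>
    o.elim (pairE h (-s)) fun i => if i = p then pairE h s else pairE (b i) 0
  have hhb : ∀ j, ⟪h, b j⟫ = if j = p then 1 else 0 := fun j => by
    rw [real_inner_smul_left, hb.inner_eq]
    by_cases hj : j = p
    · subst hj; norm_num
    · simp [hj, Ne.symm hj]
  have hbh : ∀ j, ⟪b j, h⟫ = if j = p then 1 else 0 := fun j => real_inner_comm h _ ▸ hhb j
  have hu : Orthonormal ℝ u := by
    rw [orthonormal_iff_ite]
    rintro (_ | i) (_ | j) <;> simp only [u, Option.elim, Option.some_inj, reduceCtorEq,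
      if_true, if_false] <;> (try split_ifs) <;>
      simp_all [inner_pairE_pairE, hb.inner_eq, -inner_self_eq_norm_sq_to_K] <;> norm_num
  have hmem : ∀ i, u i ∈ overLattice L {x | ∃ k : ℤ, x = (k : ℝ) • r} := by
    rintro (_ | i)
    · exact Or.inr ⟨h, hh, -s, hA.1.neg_mem_dualSet_diff hs, rfl⟩
    · show (if i = p then _ else _) ∈ _
      split_ifs
      · exact Or.inr ⟨h, hh, s, hs, rfl⟩
      · exact Or.inl ⟨b i, hb.mem i, 0, ⟨0, by simp⟩, rfl⟩
  exact ⟨u, isOrthogonalZBasis_of_orthonormal hu (by simp [hcard]) hmem fun i =>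
    hL.overLattice_zmultiples_subset_dualSet hh hhh hr (hmem i)⟩

/-- for a bimodular lattice `L ⊂ ℝ^n` and `A₁ ⊂ ℝ` the rank-1 lattice generated by
a vector of square 2, the unimodular overlattice `U = (L × A₁) ∪ ((L' \ L) × (A₁' \ A₁))` admits
an orthonormal `ℤ`-basis (i.e. `U ≅ I^{n+1}`) iff `L` is diagonal (i.e. `L ≅ Δ_n = I^{n−1} ⊕ A₁`). -/
theorem stmt6 {n : ℕ} (L : Set (EuclideanSpace ℝ (Fin n))) (hL : IsBimodular L)
    (r : EuclideanSpace ℝ (Fin 1)) (hr : ⟪r, r⟫ = 2)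
    (A₁ : Set (EuclideanSpace ℝ (Fin 1)))
    (hA₁ : A₁ = {x | ∃ k : ℤ, x = (k : ℝ) • r}) :
    HasOrthonormalZBasis (overLattice L A₁) ↔ IsDiagonal L := by
  subst hA₁
  have hA := isBimodular_zmultiples hr
  constructor
  · intro hU
    obtain ⟨e, he⟩ := hasOrthonormalZBasis_iff.1 hU
    have hw : pairE 0 r ∈ overLatticeAddSubgroup hL hA := Or.inl ⟨0, hL.1.1.1, r, ⟨1, by simp⟩, rfl⟩
    have hww : ⟪pairE (0 : 𝔼 n) r, pairE 0 r⟫ = 2 := by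
      rw [inner_pairE_pairE, inner_zero_left, hr, zero_add]
    obtain ⟨e', he', i₀, i₁, hne, hwe⟩ := he.exists_eq_add_of_inner_self_eq_two hw hww
    have hK := he'.orthogonal_add hne
    rw [← hwe] at hK
    have hr0 : r ≠ 0 := fun h => by simp [h] at hr
    exact isDiagonal_of_isOrthogonalZBasis (by simp)
      (hK.map_restFst fun z => mem_overLattice_and_inner_eq_zero_iff hA.1.1.1 hr0)
  · intro hD
    obtain ⟨b, p, hb⟩ := hD.exists_isOrthogonalZBasis hL.pos
    obtain ⟨u, hu⟩ := exists_isOrthogonalZBasis_overLattice hL (Fintype.card_fin n) hb hr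
    exact hasOrthonormalZBasis_iff.2 ⟨_, hu.comp_equiv (finSuccEquiv n)⟩

end
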